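/- Second-order sufficient condition: Assume that the map h ↦ F''(x̄)(h,h) is sequentially weak-* lower semicontinuous on X, that F''(x̄)(h,h) + G''(x̄, −F'(x̄); h) > 0 for all h ∈ X \ {0}, and that the non-degeneracy condition (NDC) holds: for all sequences h_k ⇀* 0 in X with ‖h_k‖_X = 1 and t_k ↓ 0 one has liminf_{k→∞} [ (1/t_k²)(G(x̄ + t_k h_k) − G(x̄)) + ⟨F'(x̄), h_k⟩/t_k + (1/2) F''(x̄)(h_k,h_k) ] > 0. Then there exist c > 0 and ε > 0 such that F(x) + G(x) ≥ F(x̄) + G(x̄) + (c/2)‖x − x̄‖²_X for all x ∈ B_ε(x̄). -/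

import Mathlib

open Filter Topology

/-!
Argue by contradiction: a sequence `x_k → x̄` violating quadratic growth with constants `1/k`
gives `t_k = ‖x_k - x̄‖ ↓ 0` and unit directions `h_k`, along which, by the Taylor expansion of `F`,
the second-order quotient `(G(x̄ + t_k h_k) - G(x̄))/t_k² + ⟨F'(x̄), h_k⟩/t_k + F''(x̄)(h_k, h_k)/2`
has nonpositive `liminf`. By the sequential Banach–Alaoglu theorem (`Y` is separable) a subsequence
of `h_k` converges weak-* to some `h`. If `h = 0` this contradicts (NDC); otherwise twice the
quotient dominates `F''(x̄)(h_k, h_k)` plus the difference quotient defining `G''(x̄, -F'(x̄); h)`,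
and weak-* lower semicontinuity of `h ↦ F''(x̄)(h, h)` contradicts
`F''(x̄)(h, h) + G''(x̄, -F'(x̄); h) > 0`.
-/

/-- The weak-* second subderivative `G''(x, w; h)` of `G : X → (−∞,∞]` on the dual
`X = Y*`, at `x` for `w ∈ Y`, in direction `h`. -/
noncomputable def weakStarSecondSubderiv {Y : Type*} [NormedAddCommGroup Y] [NormedSpace ℝ Y]
    (G : (Y →L[ℝ] ℝ) → EReal) (x : Y →L[ℝ] ℝ) (w : Y) (h : Y →L[ℝ] ℝ) : EReal :=
  sInf { L : EReal | ∃ (t : ℕ → ℝ) (hs : ℕ → (Y →L[ℝ] ℝ)),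
    (∀ k, 0 < t k) ∧ Tendsto t atTop (𝓝 0) ∧
    (∀ z : Y, Tendsto (fun k => hs k z) atTop (𝓝 (h z))) ∧
    L = liminf (fun k => (((2 / (t k) ^ 2 : ℝ)) : EReal) *
          (G (x + t k • hs k) - G x - (((t k * hs k w : ℝ)) : EReal))) atTop }

def TendstoWeakStar {𝕜 E : Type*} [NontriviallyNormedField 𝕜] [SeminormedAddCommGroup E]
    [NormedSpace 𝕜 E] (hs : ℕ → E →L[𝕜] 𝕜) (h : E →L[𝕜] 𝕜) : Prop :=
  ∀ z : E, Tendsto (fun k => hs k z) atTop (𝓝 (h z))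

theorem exists_strictMono_tendstoWeakStar {𝕜 E : Type*} [NontriviallyNormedField 𝕜]
    [ProperSpace 𝕜] [SeminormedAddCommGroup E] [NormedSpace 𝕜 E]
    [TopologicalSpace.SeparableSpace E] {f : ℕ → E →L[𝕜] 𝕜} {r : ℝ} (hf : ∀ k, ‖f k‖ ≤ r) :
    ∃ (h : E →L[𝕜] 𝕜) (ψ : ℕ → ℕ), StrictMono ψ ∧ TendstoWeakStar (f ∘ ψ) h := by
  obtain ⟨h, -, ψ, hψ, hlim⟩ := WeakDual.isSeqCompact_closedBall 𝕜 E 0 r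
    (x := fun k => StrongDual.toWeakDual (f k)) fun k => by simpa using hf k
  exact ⟨WeakDual.toStrongDual h, ψ, hψ,
    fun z => ((WeakDual.eval_continuous z).tendsto h).comp hlim⟩

theorem liminf_coe_nonpos_of_le_of_tendsto {α : Type*} {l : Filter α} [l.NeBot] {a δ : α → ℝ}
    (hle : ∀ k, a k ≤ δ k) (hδ : Tendsto δ l (𝓝 0)) :
    liminf (fun k => (a k : EReal)) l ≤ 0 :=
  calc liminf (fun k => (a k : EReal)) l ≤ liminf (fun k => (δ k : EReal)) l :=
        liminf_le_liminf (Eventually.of_forall fun k => EReal.coe_le_coe_iff.mpr (hle k))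
    _ = 0 := (EReal.tendsto_coe.mpr hδ).liminf_eq

section SecondOrder

variable {Y : Type*} [NormedAddCommGroup Y] [NormedSpace ℝ Y]
  {G : (Y →L[ℝ] ℝ) → EReal} {F : (Y →L[ℝ] ℝ) → ℝ} {xbar : Y →L[ℝ] ℝ} {F' : Y}
  {F'' : (Y →L[ℝ] ℝ) →L[ℝ] (Y →L[ℝ] ℝ) →L[ℝ] ℝ}

variable (G xbar F' F'') in
/-- The values of `G` are read through `EReal.toReal`, so this is meaningful only where `G` is
finite. -/
noncomputable def secondOrderQuotient (t : ℝ) (h : Y →L[ℝ] ℝ) : ℝ :=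
  ((G (xbar + t • h)).toReal - (G xbar).toReal) / t ^ 2 + h F' / t + 1 / 2 * F'' h h

theorem ne_top_and_add_toReal_lt_of_lt (hGbot : ∀ x, G x ≠ ⊥) (hxbar : G xbar ≠ ⊤) {x : Y →L[ℝ] ℝ}
    {r : ℝ} (hlt : (F x : EReal) + G x < (F xbar : EReal) + G xbar + (r : EReal)) :
    G x ≠ ⊤ ∧ F x + (G x).toReal < F xbar + (G xbar).toReal + r := by
  have hx : G x ≠ ⊤ := by
    rintro htop
    rw [htop, EReal.add_top_of_ne_bot (EReal.coe_ne_bot _), ← EReal.coe_toReal hxbar (hGbot _)]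
      at hlt
    exact not_top_lt hlt
  refine ⟨hx, ?_⟩
  rw [← EReal.coe_toReal hx (hGbot _), ← EReal.coe_toReal hxbar (hGbot _)] at hlt
  exact_mod_cast hlt

theorem exists_seq_of_not_quadratic_growth (hGbot : ∀ x, G x ≠ ⊥) (hxbar : G xbar ≠ ⊤)
    (hcon : ∀ c : ℝ, 0 < c → ∀ ε : ℝ, 0 < ε → ∃ x : Y →L[ℝ] ℝ, ‖x - xbar‖ ≤ ε ∧
      (F x : EReal) + G x < (F xbar : EReal) + G xbar + ((c / 2 * ‖x - xbar‖ ^ 2 : ℝ) : EReal)) :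
    ∃ (t : ℕ → ℝ) (hs : ℕ → Y →L[ℝ] ℝ) (ε : ℕ → ℝ), (∀ k, 0 < t k) ∧
      Tendsto t atTop (𝓝 0) ∧ (∀ k, ‖hs k‖ = 1) ∧ (∀ k, G (xbar + t k • hs k) ≠ ⊤) ∧
      Tendsto ε atTop (𝓝 0) ∧ ∀ k, F (xbar + t k • hs k) + (G (xbar + t k • hs k)).toReal ≤
        F xbar + (G xbar).toReal + ε k * t k ^ 2 := by
  have hpos (k : ℕ) : (0 : ℝ) < 1 / (k + 1) := by positivity
  choose x hxε hx using fun k : ℕ => hcon _ (hpos k) _ (hpos k)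
  choose hfin hlt using fun k => ne_top_and_add_toReal_lt_of_lt hGbot hxbar (hx k)
  have hne (k : ℕ) : x k - xbar ≠ 0 := by
    intro h0
    have := hlt k
    rw [sub_eq_zero.mp h0, sub_self, norm_zero] at this
    linarith
  have hx_eq (k : ℕ) : xbar + ‖x k - xbar‖ • (‖x k - xbar‖⁻¹ • (x k - xbar)) = x k := by
    rw [smul_inv_smul₀ (norm_ne_zero_iff.mpr (hne k)), add_sub_cancel]
  refine ⟨fun k => ‖x k - xbar‖, fun k => ‖x k - xbar‖⁻¹ • (x k - xbar), fun k => 1 / (k + 1) / 2,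
    fun k => norm_pos_iff.mpr (hne k), ?_, fun k => norm_smul_inv_norm (hne k), ?_, ?_, ?_⟩
  · exact squeeze_zero (fun k => norm_nonneg _) hxε tendsto_one_div_add_atTop_nhds_zero_nat
  · simpa only [hx_eq] using hfin
  · simpa using tendsto_one_div_add_atTop_nhds_zero_nat.div_const (2 : ℝ)
  · intro k
    rw [hx_eq]
    exact (hlt k).le

theorem secondOrderQuotient_le {t ε : ℝ} (ht : t ≠ 0) {h : Y →L[ℝ] ℝ}
    (hle : F (xbar + t • h) + (G (xbar + t • h)).toReal ≤ F xbar + (G xbar).toReal + ε * t ^ 2) :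
    secondOrderQuotient G xbar F' F'' t h ≤
      ε - (F (xbar + t • h) - F xbar - t * h F' - 1 / 2 * t ^ 2 * F'' h h) / t ^ 2 := by
  rw [← sub_nonneg]
  have key : ε - (F (xbar + t • h) - F xbar - t * h F' - 1 / 2 * t ^ 2 * F'' h h) / t ^ 2 -
      secondOrderQuotient G xbar F' F'' t h =
      (F xbar + (G xbar).toReal + ε * t ^ 2 - (F (xbar + t • h) + (G (xbar + t • h)).toReal))
        / t ^ 2 := by
    unfold secondOrderQuotient
    field_simp
    ring
  rw [key]
  exact div_nonneg (by linarith) (sq_nonneg t)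

theorem coe_secondOrderQuotient (hGbot : ∀ x, G x ≠ ⊥) (hxbar : G xbar ≠ ⊤) {t : ℝ}
    {h : Y →L[ℝ] ℝ} (hfin : G (xbar + t • h) ≠ ⊤) :
    ((1 / t ^ 2 : ℝ) : EReal) * (G (xbar + t • h) - G xbar) +
      ((h F' / t + 1 / 2 * F'' h h : ℝ) : EReal) = secondOrderQuotient G xbar F' F'' t h := by
  obtain ⟨a, ha⟩ : ∃ a : ℝ, G (xbar + t • h) = a := ⟨_, (EReal.coe_toReal hfin (hGbot _)).symm⟩
  obtain ⟨b, hb⟩ : ∃ b : ℝ, G xbar = b := ⟨_, (EReal.coe_toReal hxbar (hGbot _)).symm⟩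
  rw [secondOrderQuotient, ha, hb, EReal.toReal_coe, EReal.toReal_coe]
  norm_cast
  ring

theorem coe_two_mul_secondOrderQuotient_sub (hGbot : ∀ x, G x ≠ ⊥) (hxbar : G xbar ≠ ⊤)
    {t : ℝ} (ht : t ≠ 0) {h : Y →L[ℝ] ℝ} (hfin : G (xbar + t • h) ≠ ⊤) :
    ((2 / t ^ 2 : ℝ) : EReal) * (G (xbar + t • h) - G xbar - ((t * h (-F') : ℝ) : EReal)) =
      ((2 * secondOrderQuotient G xbar F' F'' t h - F'' h h : ℝ) : EReal) := by
  obtain ⟨a, ha⟩ : ∃ a : ℝ, G (xbar + t • h) = a := ⟨_, (EReal.coe_toReal hfin (hGbot _)).symm⟩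
  obtain ⟨b, hb⟩ : ∃ b : ℝ, G xbar = b := ⟨_, (EReal.coe_toReal hxbar (hGbot _)).symm⟩
  rw [secondOrderQuotient, ha, hb, EReal.toReal_coe, EReal.toReal_coe, map_neg]
  norm_cast
  field_simp
  ring

theorem le_liminf_two_mul_secondOrderQuotient (hGbot : ∀ x, G x ≠ ⊥) (hxbar : G xbar ≠ ⊤)
    {t : ℕ → ℝ} {hs : ℕ → Y →L[ℝ] ℝ} {h : Y →L[ℝ] ℝ} (ht : ∀ k, 0 < t k)
    (htlim : Tendsto t atTop (𝓝 0)) (hfin : ∀ k, G (xbar + t k • hs k) ≠ ⊤)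
    (hconv : TendstoWeakStar hs h)
    (hlsc : ((F'' h h : ℝ) : EReal) ≤ liminf (fun k => ((F'' (hs k) (hs k) : ℝ) : EReal)) atTop) :
    ((F'' h h : ℝ) : EReal) + weakStarSecondSubderiv G xbar (-F') h ≤
      liminf (fun k => ((2 * secondOrderQuotient G xbar F' F'' (t k) (hs k) : ℝ) : EReal)) atTop :=
  calc _ ≤ liminf (fun k => ((F'' (hs k) (hs k) : ℝ) : EReal)) atTop +
        liminf (fun k => ((2 * secondOrderQuotient G xbar F' F'' (t k) (hs k) -
          F'' (hs k) (hs k) : ℝ) : EReal)) atTop := by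
        refine add_le_add hlsc (sInf_le ⟨t, hs, ht, htlim, hconv, ?_⟩)
        congr 1
        funext k
        exact (coe_two_mul_secondOrderQuotient_sub hGbot hxbar (ht k).ne' (hfin k)).symm
    _ ≤ _ := EReal.le_liminf_add
    _ = _ := by
        congr 1
        funext k
        simp only [Pi.add_apply]
        norm_cast
        ring

end SecondOrder

theorem second_order_sufficient_condition_general
    {Y : Type*} [NormedAddCommGroup Y] [NormedSpace ℝ Y]
    [TopologicalSpace.SeparableSpace Y]
    (G : (Y →L[ℝ] ℝ) → EReal) (hGbot : ∀ x, G x ≠ ⊥)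
    (F : (Y →L[ℝ] ℝ) → ℝ)
    (xbar : Y →L[ℝ] ℝ) (hxbar : G xbar ≠ ⊤)
    (F' : Y) (F'' : (Y →L[ℝ] ℝ) →L[ℝ] (Y →L[ℝ] ℝ) →L[ℝ] ℝ)
    (hTaylor : ∀ (t : ℕ → ℝ) (hs : ℕ → (Y →L[ℝ] ℝ)) (h : Y →L[ℝ] ℝ),
      (∀ k, 0 < t k) → Tendsto t atTop (𝓝 0) →
      (∀ z : Y, Tendsto (fun k => hs k z) atTop (𝓝 (h z))) →
      (∀ k, G (xbar + t k • hs k) ≠ ⊤) →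
      Tendsto (fun k => (F (xbar + t k • hs k) - F xbar - t k * hs k F'
          - (1 / 2) * (t k) ^ 2 * F'' (hs k) (hs k)) / (t k) ^ 2) atTop (𝓝 0))
    -- sequential weak-* lower semicontinuity of `h ↦ F''(x̄)h²`
    (hlsc : ∀ (h : Y →L[ℝ] ℝ) (hs : ℕ → (Y →L[ℝ] ℝ)),
      (∀ z : Y, Tendsto (fun k => hs k z) atTop (𝓝 (h z))) →
      ((F'' h h : ℝ) : EReal) ≤ liminf (fun k => ((F'' (hs k) (hs k) : ℝ) : EReal)) atTop)
    -- positivity of the second-order expression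
    (hSSC : ∀ h : Y →L[ℝ] ℝ, h ≠ 0 →
      (0 : EReal) < ((F'' h h : ℝ) : EReal) + weakStarSecondSubderiv G xbar (-F') h)
    -- non-degeneracy condition (NDC)
    (hNDC : ∀ (t : ℕ → ℝ) (hs : ℕ → (Y →L[ℝ] ℝ)),
      (∀ k, 0 < t k) → Tendsto t atTop (𝓝 0) →
      (∀ z : Y, Tendsto (fun k => hs k z) atTop (𝓝 (0 : ℝ))) →
      (∀ k, ‖hs k‖ = 1) →
      (0 : EReal) < liminf (fun k =>
        ((1 / (t k) ^ 2 : ℝ) : EReal) * (G (xbar + t k • hs k) - G xbar)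
          + ((hs k F' / t k + (1 / 2) * F'' (hs k) (hs k) : ℝ) : EReal)) atTop) :
    ∃ c : ℝ, 0 < c ∧ ∃ ε : ℝ, 0 < ε ∧
      ∀ x : Y →L[ℝ] ℝ, ‖x - xbar‖ ≤ ε →
        ((F xbar : ℝ) : EReal) + G xbar + ((c / 2 * ‖x - xbar‖ ^ 2 : ℝ) : EReal)
          ≤ ((F x : ℝ) : EReal) + G x := by
  by_contra hcon
  push Not at hcon
  obtain ⟨t, hs, ε, ht, htlim, hnorm, hfin, hεlim, hviol⟩ :=
    exists_seq_of_not_quadratic_growth hGbot hxbar hcon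
  obtain ⟨h, ψ, hψ, hconv⟩ := exists_strictMono_tendstoWeakStar (fun k => (hnorm k).le)
  have hT := fun j => ht (ψ j)
  have hTlim := htlim.comp hψ.tendsto_atTop
  have hq (j : ℕ) := secondOrderQuotient_le (F' := F') (F'' := F'') (hT j).ne' (hviol (ψ j))
  have hδ := by
    simpa only [sub_zero] using (hεlim.comp hψ.tendsto_atTop).sub
      (hTaylor _ _ h hT hTlim hconv fun j => hfin (ψ j))
  have hq_nonpos := liminf_coe_nonpos_of_le_of_tendsto hq hδ
  by_cases h0 : h = 0
  · subst h0
    have := hNDC _ _ hT hTlim (fun z => by simpa using hconv z) fun j => hnorm (ψ j)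
    simp only [coe_secondOrderQuotient hGbot hxbar (hfin _)] at this
    exact hq_nonpos.not_gt this
  · refine (hSSC h h0).not_ge ((le_liminf_two_mul_secondOrderQuotient hGbot hxbar hT hTlim
      (fun j => hfin (ψ j)) hconv (hlsc h _ hconv)).trans ?_)
    refine liminf_coe_nonpos_of_le_of_tendsto (fun j => ?_)
      (by simpa only [mul_zero] using hδ.const_mul 2)
    exact mul_le_mul_of_nonneg_left (hq j) zero_le_two

/-- Theorem 2.6, second-order sufficient condition.
`X = Y*` with `Y` a separable Banach space; `x̄ ∈ dom G`; `F` admits the Taylor-type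
expansion `hTaylor`.  If `h ↦ F''(x̄)h²` is sequentially weak-* lower semicontinuous,
`F''(x̄)h² + G''(x̄, −F'(x̄); h) > 0` for all `h ≠ 0`, and the non-degeneracy condition
(NDC) holds, then there are `c > 0`, `ε > 0` with
`F(x) + G(x) ≥ F(x̄) + G(x̄) + (c/2)‖x − x̄‖²` for all `x ∈ B_ε(x̄)`. -/
theorem second_order_sufficient_condition
    {Y : Type*} [NormedAddCommGroup Y] [NormedSpace ℝ Y] [CompleteSpace Y]
    [TopologicalSpace.SeparableSpace Y]
    (G : (Y →L[ℝ] ℝ) → EReal) (hGbot : ∀ x, G x ≠ ⊥)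
    (F : (Y →L[ℝ] ℝ) → ℝ)
    (xbar : Y →L[ℝ] ℝ) (hxbar : G xbar ≠ ⊤)
    (F' : Y) (F'' : (Y →L[ℝ] ℝ) →L[ℝ] (Y →L[ℝ] ℝ) →L[ℝ] ℝ)
    (hTaylor : ∀ (t : ℕ → ℝ) (hs : ℕ → (Y →L[ℝ] ℝ)) (h : Y →L[ℝ] ℝ),
      (∀ k, 0 < t k) → Tendsto t atTop (𝓝 0) →
      (∀ z : Y, Tendsto (fun k => hs k z) atTop (𝓝 (h z))) →
      (∀ k, G (xbar + t k • hs k) ≠ ⊤) →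
      Tendsto (fun k => (F (xbar + t k • hs k) - F xbar - t k * hs k F'
          - (1 / 2) * (t k) ^ 2 * F'' (hs k) (hs k)) / (t k) ^ 2) atTop (𝓝 0))
    -- sequential weak-* lower semicontinuity of `h ↦ F''(x̄)h²`
    (hlsc : ∀ (h : Y →L[ℝ] ℝ) (hs : ℕ → (Y →L[ℝ] ℝ)),
      (∀ z : Y, Tendsto (fun k => hs k z) atTop (𝓝 (h z))) →
      ((F'' h h : ℝ) : EReal) ≤ liminf (fun k => ((F'' (hs k) (hs k) : ℝ) : EReal)) atTop)
    -- positivity of the second-order expression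
    (hSSC : ∀ h : Y →L[ℝ] ℝ, h ≠ 0 →
      (0 : EReal) < ((F'' h h : ℝ) : EReal) + weakStarSecondSubderiv G xbar (-F') h)
    -- non-degeneracy condition (NDC)
    (hNDC : ∀ (t : ℕ → ℝ) (hs : ℕ → (Y →L[ℝ] ℝ)),
      (∀ k, 0 < t k) → Tendsto t atTop (𝓝 0) →
      (∀ z : Y, Tendsto (fun k => hs k z) atTop (𝓝 (0 : ℝ))) →
      (∀ k, ‖hs k‖ = 1) →
      (0 : EReal) < liminf (fun k =>
        ((1 / (t k) ^ 2 : ℝ) : EReal) * (G (xbar + t k • hs k) - G xbar)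
          + ((hs k F' / t k + (1 / 2) * F'' (hs k) (hs k) : ℝ) : EReal)) atTop) :
    ∃ c : ℝ, 0 < c ∧ ∃ ε : ℝ, 0 < ε ∧
      ∀ x : Y →L[ℝ] ℝ, ‖x - xbar‖ ≤ ε →
        ((F xbar : ℝ) : EReal) + G xbar + ((c / 2 * ‖x - xbar‖ ^ 2 : ℝ) : EReal)
          ≤ ((F x : ℝ) : EReal) + G x :=
  second_order_sufficient_condition_general G hGbot F xbar hxbar F' F'' hTaylor hlsc hSSC hNDC
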